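/- Let G be a finite graph whose edge set can be partitioned into cycles, but which admits no partition of its edge set into alternating cycles with respect to the vertical order of its vertices. Then G has a vertex v for which ldeg_G(v) is odd (equivalently, hdeg_G(v) is odd, since ldeg_G(v) + hdeg_G(v) = deg_G(v) is even). -/

import Mathlib

/-! Common definitions: vertical (multi)graphs on `Fin n` (vertices ordered by height,
vertex `v` at height `(v : ℕ)`), edges stored as pairs `(lower, upper)`. -/

/-- Number of edges of `E` from `v` to strictly lower vertices
(i.e. edges whose upper endpoint is `v`), with multiplicity. -/
def ldeg {n : ℕ} (E : Multiset (Fin n × Fin n)) (v : Fin n) : ℕ :=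
  (E.filter (fun e => e.2 = v)).card

/-- Number of edges of `E` from `v` to strictly higher vertices
(i.e. edges whose lower endpoint is `v`), with multiplicity. -/
def hdeg {n : ℕ} (E : Multiset (Fin n × Fin n)) (v : Fin n) : ℕ :=
  (E.filter (fun e => e.1 = v)).card

/-- An alternating cycle: a closed walk `w 0, w 1, …, w (2m) = w 0` whose edges
alternately go up and down (odd-indexed vertices are above both cyclic neighbours). -/
structure AltCycle (n : ℕ) where
  m : ℕ
  pos : 0 < m
  w : ℕ → Fin n
  closed : w (2 * m) = w 0
  up : ∀ j < m, w (2 * j) < w (2 * j + 1)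
  down : ∀ j < m, w (2 * j + 2) < w (2 * j + 1)

/-- The up-edges of an alternating cycle (as `(lower, upper)` pairs). -/
def AltCycle.upEdges {n : ℕ} (C : AltCycle n) : Multiset (Fin n × Fin n) :=
  (Multiset.range C.m).map (fun j => (C.w (2 * j), C.w (2 * j + 1)))

/-- The down-edges of an alternating cycle (as `(lower, upper)` pairs). -/
def AltCycle.downEdges {n : ℕ} (C : AltCycle n) : Multiset (Fin n × Fin n) :=
  (Multiset.range C.m).map (fun j => (C.w (2 * j + 2), C.w (2 * j + 1)))

/-- All edges of an alternating cycle. -/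
def AltCycle.edges {n : ℕ} (C : AltCycle n) : Multiset (Fin n × Fin n) :=
  C.upEdges + C.downEdges

/-- The edge multiset `E` can be partitioned into alternating cycles. -/
def AltPartition {n : ℕ} (E : Multiset (Fin n × Fin n)) : Prop :=
  ∃ (k : ℕ) (Cs : Fin k → AltCycle n), E = ∑ i, (Cs i).edges

/-- The undirected edge between `a` and `b`, stored as a `(lower, upper)` pair. -/
def stepEdge {n : ℕ} (a b : Fin n) : Fin n × Fin n := if a < b then (a, b) else (b, a)

/-- `E` contains a (vertex-simple) cycle: a closed walk with pairwise distinct vertices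
whose (undirected) edge multiset is contained in `E`. -/
def HasCycle {n : ℕ} (E : Multiset (Fin n × Fin n)) : Prop :=
  ∃ (len : ℕ) (w : ℕ → Fin n), 0 < len ∧ w len = w 0 ∧
    (∀ i < len, ∀ j < len, w i = w j → i = j) ∧
    ((Multiset.range len).map (fun j => stepEdge (w j) (w (j + 1)))) ≤ E

/-- Reachability (connectivity) in the multigraph with edge multiset `E`. -/
def Reach {n : ℕ} (E : Multiset (Fin n × Fin n)) (a b : Fin n) : Prop :=
  Relation.ReflTransGen (fun x y => (x, y) ∈ E ∨ (y, x) ∈ E) a b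

/-- The connected component of `v` in `E` is a single vertex or a path along
vertices of strictly increasing height. -/
def IncPathComp {n : ℕ} (E : Multiset (Fin n × Fin n)) (v : Fin n) : Prop :=
  ∃ (m : ℕ) (p : Fin (m + 1) → Fin n), StrictMono p ∧
    (∀ u, Reach E v u ↔ ∃ i, p i = u) ∧
    (∀ i : Fin m, (p i.castSucc, p i.succ) ∈ E)

/-- The edges present at stage `j` of the upward lower-star filtration:
those whose upper endpoint has height at most `j`. -/
def levelEdges {n : ℕ} (E : Multiset (Fin n × Fin n)) (j : ℕ) : Multiset (Fin n × Fin n) :=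
  E.filter (fun e => (e.2 : ℕ) ≤ j)

/-- Death time (elder rule) of the 0-dimensional class created by vertex `v` in the
upward lower-star filtration: the first height at which `v` gets connected to a
strictly lower (older) vertex, or `∞` if this never happens. -/
noncomputable def death0 {n : ℕ} (E : Multiset (Fin n × Fin n)) (v : Fin n) : ℕ∞ :=
  sInf ((fun j : ℕ => (j : ℕ∞)) '' {j : ℕ | ∃ u, u < v ∧ Reach (levelEdges E j) u v})

/-- The 0-dimensional verbose persistence diagram in the up direction: one point
per vertex, born at the height of the vertex. -/
noncomputable def diag0 {n : ℕ} (E : Multiset (Fin n × Fin n)) : Multiset (ℕ × ℕ∞) :=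
  (Finset.univ.val : Multiset (Fin n)).map (fun v : Fin n => ((v : ℕ), death0 E v))

/-- Number of edges entering at height `j` (upper endpoint of height `j`). -/
def edgesAt {n : ℕ} (E : Multiset (Fin n × Fin n)) (j : ℕ) : ℕ :=
  (E.filter (fun e => (e.2 : ℕ) = j)).card

/-- Number of 0-dimensional points dying at height `j` in the verbose diagram. -/
noncomputable def deaths0At {n : ℕ} (E : Multiset (Fin n × Fin n)) (j : ℕ) : ℕ :=
  Nat.card {v : Fin n // death0 E v = (j : ℕ∞)}

/-- Number of 1-dimensional classes born at height `j`: edges entering at height `j`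
that are creators rather than destructors. -/
noncomputable def cyclesBornAt {n : ℕ} (E : Multiset (Fin n × Fin n)) (j : ℕ) : ℕ :=
  edgesAt E j - deaths0At E j

/-- The graph with the vertical order reversed (for the down direction). -/
def flipE {n : ℕ} (E : Multiset (Fin n × Fin n)) : Multiset (Fin n × Fin n) :=
  E.map (fun e => (e.2.rev, e.1.rev))

/-- Equality of the verbose persistence diagrams in the up direction. -/
def UpDiagEq {n : ℕ} (E1 E2 : Multiset (Fin n × Fin n)) : Prop :=
  diag0 E1 = diag0 E2 ∧ ∀ j, cyclesBornAt E1 j = cyclesBornAt E2 j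

/-- Equality of VPHTs for vertical graphs: the verbose diagrams agree in both the
up and the down direction. -/
def VPHTEq {n : ℕ} (E1 E2 : Multiset (Fin n × Fin n)) : Prop :=
  UpDiagEq E1 E2 ∧ UpDiagEq (flipE E1) (flipE E2)

/-- Number of connected components of the multigraph with edge multiset `E`. -/
noncomputable def numComponents {n : ℕ} (E : Multiset (Fin n × Fin n)) : ℕ :=
  Nat.card (Quot (Reach E))

/-- The edge multiset `E` can be partitioned into cycles (closed trails). -/
def CircuitPartition {n : ℕ} (E : Multiset (Fin n × Fin n)) : Prop :=
  ∃ (k : ℕ) (len : Fin k → ℕ) (w : Fin k → ℕ → Fin n),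
    (∀ i, 0 < len i) ∧ (∀ i, w i (len i) = w i 0) ∧
    (∀ i, ∀ j < len i, w i j ≠ w i (j + 1)) ∧
    (∑ i, (Multiset.range (len i)).map (fun j => stepEdge (w i j) (w i (j + 1)))) = E

/-!
A circuit partition makes `ldeg v + hdeg v` even at every vertex, so if no vertex has both
degrees odd, all of them are even. Then alternating cycles can be peeled off greedily: go up an
edge `(a, b)`; as `ldeg b` is even, another edge `(c, b)` comes down to `b`. Removing both keeps
every `ldeg` even and leaves `hdeg` odd exactly at `a` and `c` (if `a ≠ c`), so the walk can go on
upwards from `c`. Each step preserves this invariant, hence the walk can only stop back at `a`.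
-/

open Multiset

theorem Multiset.map_range_succ' {α : Type*} (f : ℕ → α) (m : ℕ) :
    (range (m + 1)).map f = f 0 ::ₘ (range m).map (fun j => f (j + 1)) := by
  rw [← coe_range, List.range_succ_eq_map]
  simp [← coe_range, Function.comp_def]

theorem Multiset.map_range_shift_of_eq {α : Type*} {f : ℕ → α} {m : ℕ} (h : f m = f 0) :
    (range m).map (fun j => f (j + 1)) = (range m).map f := by
  have key := map_range_succ' f m
  rw [range_succ, map_cons, h] at key
  exact ((cons_inj_right _).1 key).symm

section Degrees

variable {n : ℕ}

theorem ldeg_eq_count (E : Multiset (Fin n × Fin n)) (v : Fin n) :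
    ldeg E v = (E.map Prod.snd).count v := by
  simp only [ldeg, count_map, eq_comm]

theorem hdeg_eq_count (E : Multiset (Fin n × Fin n)) (v : Fin n) :
    hdeg E v = (E.map Prod.fst).count v := by
  simp only [hdeg, count_map, eq_comm]

theorem ldeg_add (E₁ E₂ : Multiset (Fin n × Fin n)) (v : Fin n) :
    ldeg (E₁ + E₂) v = ldeg E₁ v + ldeg E₂ v := by
  simp only [ldeg_eq_count, map_add, count_add]

theorem hdeg_add (E₁ E₂ : Multiset (Fin n × Fin n)) (v : Fin n) :
    hdeg (E₁ + E₂) v = hdeg E₁ v + hdeg E₂ v := by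
  simp only [hdeg_eq_count, map_add, count_add]

theorem ldeg_cons (e : Fin n × Fin n) (E : Multiset (Fin n × Fin n)) (v : Fin n) :
    ldeg (e ::ₘ E) v = ldeg E v + if v = e.2 then 1 else 0 := by
  simp only [ldeg_eq_count, map_cons, count_cons]

theorem hdeg_cons (e : Fin n × Fin n) (E : Multiset (Fin n × Fin n)) (v : Fin n) :
    hdeg (e ::ₘ E) v = hdeg E v + if v = e.1 then 1 else 0 := by
  simp only [hdeg_eq_count, map_cons, count_cons]

theorem exists_eq_cons_of_ldeg_ne_zero {E : Multiset (Fin n × Fin n)} {v : Fin n}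
    (h : ldeg E v ≠ 0) : ∃ u E', E = (u, v) ::ₘ E' := by
  obtain ⟨e, he⟩ := card_pos_iff_exists_mem.mp (Nat.pos_of_ne_zero h)
  obtain ⟨he', rfl⟩ := mem_filter.mp he
  exact ⟨e.1, exists_cons_of_mem he'⟩

theorem exists_eq_cons_of_hdeg_ne_zero {E : Multiset (Fin n × Fin n)} {v : Fin n}
    (h : hdeg E v ≠ 0) : ∃ u E', E = (v, u) ::ₘ E' := by
  obtain ⟨e, he⟩ := card_pos_iff_exists_mem.mp (Nat.pos_of_ne_zero h)
  obtain ⟨he', rfl⟩ := mem_filter.mp he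
  exact ⟨e.2, exists_cons_of_mem he'⟩

theorem stepEdge_fst_add_snd (a b : Fin n) :
    ({(stepEdge a b).1} + {(stepEdge a b).2} : Multiset (Fin n)) = {a} + {b} := by
  unfold stepEdge
  split_ifs
  · rfl
  · exact add_comm _ _

theorem map_fst_add_map_snd_stepEdge_walk {L : ℕ} {w : ℕ → Fin n} (hw : w L = w 0) :
    ((range L).map (fun j => stepEdge (w j) (w (j + 1)))).map Prod.fst +
        ((range L).map (fun j => stepEdge (w j) (w (j + 1)))).map Prod.snd =
      (range L).map w + (range L).map w := by
  calc _ = (range L).bind fun j =>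
          {(stepEdge (w j) (w (j + 1))).1} + {(stepEdge (w j) (w (j + 1))).2} := by
        simp only [bind_add, bind_singleton, map_map, Function.comp_def]
    _ = (range L).bind fun j => {w j} + {w (j + 1)} :=
        bind_congr fun j _ => stepEdge_fst_add_snd _ _
    _ = _ := by rw [bind_add, bind_singleton, bind_singleton, map_range_shift_of_eq hw]

theorem CircuitPartition.even_ldeg_iff_even_hdeg {E : Multiset (Fin n × Fin n)}
    (h : CircuitPartition E) (v : Fin n) : Even (ldeg E v) ↔ Even (hdeg E v) := by
  obtain ⟨k, len, w, -, hclosed, -, rfl⟩ := h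
  rw [← Nat.even_add, ldeg_eq_count, hdeg_eq_count, ← count_add, add_comm,
    ← mapAddMonoidHom_apply Prod.fst, ← mapAddMonoidHom_apply Prod.snd, map_sum, map_sum,
    ← Finset.sum_add_distrib, count_sum']
  refine Finset.even_sum _ fun i _ => ?_
  rw [mapAddMonoidHom_apply, mapAddMonoidHom_apply,
    map_fst_add_map_snd_stepEdge_walk (hclosed i), count_add]
  exact Even.add_self _

end Degrees

namespace AltCycle

variable {n : ℕ} (C : AltCycle n)

theorem map_snd_edges :
    C.edges.map Prod.snd =
      (range C.m).map (fun j => C.w (2 * j + 1)) + (range C.m).map (fun j => C.w (2 * j + 1)) := by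
  simp only [edges, upEdges, downEdges, map_add, map_map, Function.comp_def]

theorem map_fst_edges :
    C.edges.map Prod.fst =
      (range C.m).map (fun j => C.w (2 * j)) + (range C.m).map (fun j => C.w (2 * j)) := by
  simp only [edges, upEdges, downEdges, map_add, map_map, Function.comp_def]
  congr 1
  exact map_range_shift_of_eq (f := fun j => C.w (2 * j)) C.closed

theorem even_ldeg_edges (v : Fin n) : Even (ldeg C.edges v) := by
  rw [ldeg_eq_count, map_snd_edges, count_add]
  exact Even.add_self _

theorem even_hdeg_edges (v : Fin n) : Even (hdeg C.edges v) := by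
  rw [hdeg_eq_count, map_fst_edges, count_add]
  exact Even.add_self _

theorem edges_ne_zero : C.edges ≠ 0 := by
  rw [← card_pos]
  simp [edges, upEdges, C.pos]

theorem altPartition_edges : AltPartition C.edges :=
  ⟨1, fun _ => C, by simp⟩

end AltCycle

theorem AltPartition.zero {n : ℕ} : AltPartition (0 : Multiset (Fin n × Fin n)) :=
  ⟨0, Fin.elim0, by simp⟩

theorem AltPartition.add {n : ℕ} {E₁ E₂ : Multiset (Fin n × Fin n)} (h₁ : AltPartition E₁)
    (h₂ : AltPartition E₂) : AltPartition (E₁ + E₂) := by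
  obtain ⟨k₁, C₁, rfl⟩ := h₁
  obtain ⟨k₂, C₂, rfl⟩ := h₂
  exact ⟨k₁ + k₂, Fin.append C₁ C₂, by simp [Fin.sum_univ_add]⟩

structure AltPath (n : ℕ) where
  m : ℕ
  w : ℕ → Fin n
  up : ∀ j < m, w (2 * j) < w (2 * j + 1)
  down : ∀ j < m, w (2 * j + 2) < w (2 * j + 1)

namespace AltPath

variable {n : ℕ}

def edges (P : AltPath n) : Multiset (Fin n × Fin n) :=
  (range P.m).map (fun j => (P.w (2 * j), P.w (2 * j + 1))) +
    (range P.m).map (fun j => (P.w (2 * j + 2), P.w (2 * j + 1)))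

def nil (v : Fin n) : AltPath n where
  m := 0
  w _ := v
  up _ h := absurd h (Nat.not_lt_zero _)
  down _ h := absurd h (Nat.not_lt_zero _)

@[simp]
theorem edges_nil (v : Fin n) : (nil v).edges = 0 := rfl

def cons (v p : Fin n) (P : AltPath n) (hv : v < p) (hP : P.w 0 < p) : AltPath n where
  m := P.m + 1
  w
    | 0 => v
    | 1 => p
    | k + 2 => P.w k
  up
    | 0, _ => hv
    | j + 1, hj => P.up j (by omega)
  down
    | 0, _ => hP
    | j + 1, hj => P.down j (by omega)

theorem edges_cons (v p : Fin n) (P : AltPath n) (hv : v < p) (hP : P.w 0 < p) :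
    (cons v p P hv hP).edges = (v, p) ::ₘ (P.w 0, p) ::ₘ P.edges := by
  change map _ (range (P.m + 1)) + map _ (range (P.m + 1)) = _
  rw [map_range_succ', map_range_succ', cons_add, add_cons]
  rfl

def toAltCycle (P : AltPath n) (hm : 0 < P.m) (hP : P.w (2 * P.m) = P.w 0) : AltCycle n :=
  ⟨P.m, hm, P.w, hP, P.up, P.down⟩

end AltPath

section Construction

variable {n : ℕ}

theorem exists_eq_cons_of_even_ldeg_cons {E : Multiset (Fin n × Fin n)} {v p : Fin n}
    (hl : ∀ u, Even (ldeg ((v, p) ::ₘ E) u)) :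
    ∃ c E', E = (c, p) ::ₘ E' ∧ ∀ u, Even (ldeg E' u) := by
  have hp : ldeg E p ≠ 0 := fun h => by simpa [ldeg_cons, h] using hl p
  obtain ⟨c, E', rfl⟩ := exists_eq_cons_of_ldeg_ne_zero hp
  refine ⟨c, E', rfl, fun u => ?_⟩
  have := hl u
  rw [ldeg_cons, ldeg_cons] at this
  simp only [Nat.even_iff] at this ⊢
  omega

theorem exists_altPath {E : Multiset (Fin n × Fin n)} (hE : ∀ e ∈ E, e.1 < e.2)
    (hl : ∀ u, Even (ldeg E u)) (v a : Fin n)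
    (hh : ∀ u, Even (hdeg E u + (if u = v then 1 else 0) + (if u = a then 1 else 0))) :
    ∃ P : AltPath n, P.w 0 = v ∧ P.w (2 * P.m) = a ∧ P.edges ≤ E := by
  induction E using Multiset.strongInductionOn generalizing v with
  | ih E ih =>
  by_cases hva : v = a
  · exact ⟨AltPath.nil v, rfl, hva, by simp⟩
  have hv : hdeg E v ≠ 0 := fun h => by simpa [hva, h] using hh v
  obtain ⟨p, E₁, rfl⟩ := exists_eq_cons_of_hdeg_ne_zero hv
  obtain ⟨c, E₂, rfl, hl₂⟩ := exists_eq_cons_of_even_ldeg_cons hl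
  have hh₂ : ∀ u, Even (hdeg E₂ u + (if u = c then 1 else 0) + (if u = a then 1 else 0)) := by
    intro u
    have := hh u
    rw [hdeg_cons, hdeg_cons] at this
    simp only [Nat.even_iff] at this ⊢
    omega
  obtain ⟨P, rfl, hPa, hP⟩ := ih E₂ ((lt_cons_self _ _).trans (lt_cons_self _ _))
    (fun e he => hE e (mem_cons_of_mem (mem_cons_of_mem he))) hl₂ _ hh₂
  have hvp : v < p := hE _ (mem_cons_self _ _)
  have hcp : P.w 0 < p := hE _ (mem_cons_of_mem (mem_cons_self _ _))
  refine ⟨AltPath.cons v p P hvp hcp, rfl, hPa, ?_⟩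
  rw [AltPath.edges_cons]
  exact cons_le_cons _ (cons_le_cons _ hP)

theorem exists_altCycle_edges_le {E : Multiset (Fin n × Fin n)} (hE : ∀ e ∈ E, e.1 < e.2)
    (hl : ∀ u, Even (ldeg E u)) (hh : ∀ u, Even (hdeg E u)) (h0 : E ≠ 0) :
    ∃ C : AltCycle n, C.edges ≤ E := by
  obtain ⟨⟨a, b⟩, he⟩ := exists_mem_of_ne_zero h0
  obtain ⟨E₁, rfl⟩ := exists_cons_of_mem he
  obtain ⟨c, E₂, rfl, hl₂⟩ := exists_eq_cons_of_even_ldeg_cons hl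
  have hh₂ : ∀ u, Even (hdeg E₂ u + (if u = c then 1 else 0) + (if u = a then 1 else 0)) :=
    fun u => by simpa only [hdeg_cons] using hh u
  obtain ⟨P, rfl, hPa, hP⟩ := exists_altPath
    (fun e he => hE e (mem_cons_of_mem (mem_cons_of_mem he))) hl₂ c a hh₂
  have hab : a < b := hE _ (mem_cons_self _ _)
  have hcb : P.w 0 < b := hE _ (mem_cons_of_mem (mem_cons_self _ _))
  exact ⟨(AltPath.cons a b P hab hcb).toAltCycle (Nat.succ_pos _) hPa,
    (AltPath.edges_cons a b P hab hcb).trans_le (cons_le_cons _ (cons_le_cons _ hP))⟩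

theorem altPartition_of_even {E : Multiset (Fin n × Fin n)} (hE : ∀ e ∈ E, e.1 < e.2)
    (hl : ∀ u, Even (ldeg E u)) (hh : ∀ u, Even (hdeg E u)) : AltPartition E := by
  induction E using Multiset.strongInductionOn with
  | ih E ih =>
  rcases eq_or_ne E 0 with rfl | h0
  · exact AltPartition.zero
  obtain ⟨C, hC⟩ := exists_altCycle_edges_le hE hl hh h0
  obtain ⟨R, rfl⟩ := Multiset.le_iff_exists_add.mp hC
  have hR : R < C.edges + R := lt_add_of_pos_left R (pos_iff_ne_zero.2 C.edges_ne_zero)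
  refine C.altPartition_edges.add (ih R hR
    (fun e he => hE e (mem_add.mpr (Or.inr he))) (fun u => ?_) (fun u => ?_))
  · have := hl u
    rw [ldeg_add] at this
    exact (Nat.even_add.mp this).mp (C.even_ldeg_edges u)
  · have := hh u
    rw [hdeg_add] at this
    exact (Nat.even_add.mp this).mp (C.even_hdeg_edges u)

end Construction

/-- A vertical multigraph whose edges can be partitioned into cycles
(closed trails) but not into alternating cycles has a vertex with odd `ldeg`
(equivalently odd `hdeg`). -/
theorem no_altPartition_odd_ldeg {n : ℕ} (E : Multiset (Fin n × Fin n))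
    (hE : ∀ e ∈ E, e.1 < e.2)
    (hcyc : CircuitPartition E) (halt : ¬ AltPartition E) :
    ∃ v : Fin n, Odd (ldeg E v) ∧ Odd (hdeg E v) := by
  by_contra! hodd
  have hl : ∀ v, Even (ldeg E v) := fun v => by
    by_contra h
    exact hodd v (Nat.not_even_iff_odd.mp h)
      (Nat.not_even_iff_odd.mp (mt (hcyc.even_ldeg_iff_even_hdeg v).mpr h))
  exact halt (altPartition_of_even hE hl fun v => (hcyc.even_ldeg_iff_even_hdeg v).mp (hl v))
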